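/- If d is a positive even integer having exactly m distinct prime factors, where m ≥ 3, then M(d) ≤ 2^{m+1} + 1. -/

import Mathlib

/-- A pair of integers `(a, b)` is multiplicatively dependent: `ab ≠ 0` and
there is a nonzero pair of integer exponents `(k₁, k₂)` with `a^k₁ * b^k₂ = 1`
(evaluated in `ℚ`). -/
def MultDepPair (a b : ℤ) : Prop :=
  a * b ≠ 0 ∧ ∃ k : ℤ × ℤ, k ≠ 0 ∧ (a : ℚ) ^ k.1 * (b : ℚ) ^ k.2 = 1

/-- `MSet d` is the set of multiplicatively dependent pairs `(a, b) ∈ ℤ²`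
with difference `b - a = d`. -/
def MSet (d : ℤ) : Set (ℤ × ℤ) :=
  {p | MultDepPair p.1 p.2 ∧ p.2 - p.1 = d}

/-- `M d` is the number of multiplicatively dependent pairs with difference `d`. -/
noncomputable def M (d : ℤ) : ℕ := (MSet d).ncard

/-- `g` is a perfect power: `g = a ^ k` with `a ≥ 2`, `k ≥ 2`. -/
def IsPerfectPow (g : ℕ) : Prop := ∃ a k : ℕ, 2 ≤ a ∧ 2 ≤ k ∧ g = a ^ k

/-- `Nplus d` is the number of primitive solutions `(g, x, y)` of `g^y + g^x = d`
with `g ≥ 2` not a perfect power and `y > x ≥ 1`. -/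
noncomputable def Nplus (d : ℕ) : ℕ :=
  {T : ℕ × ℕ × ℕ | 2 ≤ T.1 ∧ 1 ≤ T.2.1 ∧ T.2.1 < T.2.2 ∧ ¬ IsPerfectPow T.1 ∧
    T.1 ^ T.2.2 + T.1 ^ T.2.1 = d}.ncard

/-- `Nminus d` is the number of primitive solutions `(g, x, y)` of `g^y - g^x = d`
with `g ≥ 2` not a perfect power and `y > x ≥ 1`. -/
noncomputable def Nminus (d : ℕ) : ℕ :=
  {T : ℕ × ℕ × ℕ | 2 ≤ T.1 ∧ 1 ≤ T.2.1 ∧ T.2.1 < T.2.2 ∧ ¬ IsPerfectPow T.1 ∧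
    T.1 ^ T.2.2 = T.1 ^ T.2.1 + d}.ncard

/-!
If `|a|, |b| ≥ 2` and `(a, b)` is multiplicatively dependent, then `|a| = g ^ x` and
`|b| = g ^ y` for one `g ≥ 2` that is not a perfect power. Hence, apart from five pairs with an
entry `±1` or of the form `(-d/2, d/2)`, every pair of `ℳ(d)` is one of two pairs attached to a
solution of `g ^ y + g ^ x = d` or of `g ^ y - g ^ x = d` with `x < y`, and
`M(d) ≤ 5 + 2 (N⁺(d) + N⁻(d))`.

For such a solution `d = g ^ x (g ^ (y - x) ± 1)` with coprime factors, so `g ^ x` is a unitary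
divisor of `d`, and it determines the solution. It is neither `1` nor `d` (for `-` this needs
`d` not a power of `2`), and a `+` and a `-` solution share it only if `d = 3 · 2 ^ x`. A unitary
divisor is determined by its set of prime factors, so `N⁺(d) + N⁻(d) ≤ 2 ^ m - 2` when `m ≥ 3`.
-/

lemma exists_eq_pow_not_isPerfectPow {n : ℕ} (hn : 2 ≤ n) :
    ∃ g k : ℕ, 2 ≤ g ∧ ¬IsPerfectPow g ∧ 0 < k ∧ n = g ^ k := by
  induction n using Nat.strong_induction_on with
  | _ n ih =>
    by_cases hp : IsPerfectPow n
    · obtain ⟨a, k, ha, hk, rfl⟩ := hp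
      have hak : a < a ^ k := by simpa using Nat.pow_lt_pow_right ha (by omega : 1 < k)
      obtain ⟨g, j, hg, hg', hj, rfl⟩ := ih a hak ha
      exact ⟨g, j * k, hg, hg', by positivity, by rw [pow_mul]⟩
    · exact ⟨n, 1, hn, hp, one_pos, (pow_one n).symm⟩

lemma eq_one_of_eq_pow_of_not_isPerfectPow {n c k : ℕ} (hn : 2 ≤ n) (hn' : ¬IsPerfectPow n)
    (h : n = c ^ k) : k = 1 := by
  have hc : 2 ≤ c := by
    by_contra! hc
    have : c ^ k ≤ 1 := pow_le_one₀ (Nat.zero_le c) (by omega)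
    omega
  have hk : k ≠ 0 := by rintro rfl; simp at h; omega
  by_contra hk1
  exact hn' ⟨c, k, hc, by omega, h⟩

lemma eq_and_eq_of_pow_eq_pow_of_not_isPerfectPow {g h x u : ℕ} (hg : 2 ≤ g) (hh : 2 ≤ h)
    (hg' : ¬IsPerfectPow g) (hh' : ¬IsPerfectPow h) (hx : x ≠ 0) (heq : g ^ x = h ^ u) :
    g = h ∧ x = u := by
  obtain ⟨c, hgc, hhc⟩ := Nat.exists_eq_pow_of_pow_eq_pow (Or.inl hx) heq
  have hgh : g = h := by
    rw [hgc, hhc, eq_one_of_eq_pow_of_not_isPerfectPow hg hg' hgc,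
      eq_one_of_eq_pow_of_not_isPerfectPow hh hh' hhc]
  subst hgh
  exact ⟨rfl, Nat.pow_right_injective hg heq⟩

lemma exists_pow_eq_pow_of_zpow_mul_zpow_eq_one {A B : ℕ} (hA : 2 ≤ A) (hB : 2 ≤ B)
    {k : ℤ × ℤ} (hk : k ≠ 0) (h : (A : ℚ) ^ k.1 * (B : ℚ) ^ k.2 = 1) :
    ∃ n₁ n₂ : ℕ, n₁ ≠ 0 ∧ n₂ ≠ 0 ∧ A ^ n₁ = B ^ n₂ := by
  suffices ∃ n₁ n₂ : ℕ, (n₁ ≠ 0 ∨ n₂ ≠ 0) ∧ A ^ n₁ = B ^ n₂ by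
    obtain ⟨n₁, n₂, hn, h⟩ := this
    refine ⟨n₁, n₂, ?_, ?_, h⟩ <;> rintro rfl
    · rw [pow_zero, eq_comm, Nat.pow_eq_one] at h; omega
    · rw [pow_zero, Nat.pow_eq_one] at h; omega
  have eq_zero_of_pow_mul_pow_eq_one (n₁ n₂ : ℕ) (h : A ^ n₁ * B ^ n₂ = 1) : n₁ = 0 ∧ n₂ = 0 := by
    simp only [mul_eq_one, Nat.pow_eq_one] at h
    omega
  obtain ⟨k₁, k₂⟩ := k
  obtain ⟨n₁, rfl | rfl⟩ := Int.eq_nat_or_neg k₁ <;>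
    obtain ⟨n₂, rfl | rfl⟩ := Int.eq_nat_or_neg k₂ <;>
    simp only [ne_eq, Prod.mk_eq_zero, neg_eq_zero, Nat.cast_eq_zero, not_and_or] at hk <;>
    simp only [zpow_neg, zpow_natCast, ← mul_inv, inv_eq_one] at h
  · exact absurd (eq_zero_of_pow_mul_pow_eq_one n₁ n₂ (by exact_mod_cast h)) (by omega)
  · exact ⟨n₁, n₂, hk, by exact_mod_cast (mul_inv_eq_one₀ (by positivity)).mp h⟩
  · exact ⟨n₁, n₂, hk, by exact_mod_cast (inv_mul_eq_one₀ (by positivity)).mp h⟩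
  · exact absurd (eq_zero_of_pow_mul_pow_eq_one n₁ n₂ (by exact_mod_cast h)) (by omega)

lemma MultDepPair.exists_natAbs_eq_pow {a b : ℤ} (h : MultDepPair a b) (ha : 2 ≤ a.natAbs)
    (hb : 2 ≤ b.natAbs) :
    ∃ g x y : ℕ, 2 ≤ g ∧ ¬IsPerfectPow g ∧ 0 < x ∧ 0 < y ∧ a.natAbs = g ^ x ∧ b.natAbs = g ^ y := by
  obtain ⟨-, k, hk, hab⟩ := h
  have habs : (a.natAbs : ℚ) ^ k.1 * (b.natAbs : ℚ) ^ k.2 = 1 := by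
    simpa [abs_mul, abs_zpow] using congrArg abs hab
  obtain ⟨n₁, n₂, hn₁, hn₂, hpow⟩ := exists_pow_eq_pow_of_zpow_mul_zpow_eq_one ha hb hk habs
  obtain ⟨g, x, hg, hg', hx, hgx⟩ := exists_eq_pow_not_isPerfectPow ha
  obtain ⟨h, y, hh, hh', hy, hhy⟩ := exists_eq_pow_not_isPerfectPow hb
  rw [hgx, hhy, ← pow_mul, ← pow_mul] at hpow
  obtain ⟨rfl, -⟩ :=
    eq_and_eq_of_pow_eq_pow_of_not_isPerfectPow hg hh hg' hh' (by positivity) hpow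
  exact ⟨g, x, y, hg, hg', hx, hy, hgx, hhy⟩

def IsUnitaryDivisor (e d : ℕ) : Prop := ∃ c, e * c = d ∧ e.Coprime c

namespace IsUnitaryDivisor

variable {e d : ℕ}

lemma dvd (h : IsUnitaryDivisor e d) : e ∣ d :=
  let ⟨c, hc, _⟩ := h
  ⟨c, hc.symm⟩

lemma factorization_apply (h : IsUnitaryDivisor e d) (p : ℕ) :
    e.factorization p = if p ∈ e.primeFactors then d.factorization p else 0 := by
  obtain ⟨c, rfl, hco⟩ := h
  split_ifs with hp
  · exact (Nat.factorization_eq_of_coprime_left hco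
      (Nat.mem_primeFactors_iff_mem_primeFactorsList.mp hp)).symm
  · rwa [← Nat.support_factorization, Finsupp.notMem_support_iff] at hp

lemma eq_of_primeFactors_eq {e' : ℕ} (hd : d ≠ 0) (h : IsUnitaryDivisor e d)
    (h' : IsUnitaryDivisor e' d) (hpf : e.primeFactors = e'.primeFactors) : e = e' :=
  Nat.eq_of_factorization_eq (ne_zero_of_dvd_ne_zero hd h.dvd) (ne_zero_of_dvd_ne_zero hd h'.dvd)
    fun p => by rw [h.factorization_apply, h'.factorization_apply, hpf]

end IsUnitaryDivisor

def properUnitaryDivisors (d : ℕ) : Set ℕ := {e | IsUnitaryDivisor e d ∧ 1 < e ∧ e < d}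

lemma ncard_properUnitaryDivisors_le {d : ℕ} (hd : 1 < d) :
    (properUnitaryDivisors d).ncard ≤ 2 ^ d.primeFactors.card - 2 := by
  classical
  set S := (d.primeFactors.powerset.erase ∅).erase d.primeFactors
  have hd0 : d ≠ 0 := by omega
  have hS : S.card = 2 ^ d.primeFactors.card - 2 := by
    have hne := (Nat.nonempty_primeFactors.mpr hd).ne_empty
    rw [Finset.card_erase_of_mem (by simpa using hne), Finset.card_erase_of_mem (by simp),
      Finset.card_powerset]
    omega
  calc _ ≤ (S : Set (Finset ℕ)).ncard := by
        refine Set.ncard_le_ncard_of_injOn Nat.primeFactors ?_ ?_ S.finite_toSet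
        · rintro e ⟨he, he1, hed⟩
          simp only [S, Finset.coe_erase, Set.mem_sdiff, Set.mem_singleton_iff, Finset.mem_coe,
            Finset.mem_powerset]
          have hdd : IsUnitaryDivisor d d := ⟨1, mul_one d, Nat.coprime_one_right d⟩
          exact ⟨⟨Nat.primeFactors_mono he.dvd hd0, (Nat.nonempty_primeFactors.mpr he1).ne_empty⟩,
            fun h => hed.ne (he.eq_of_primeFactors_eq hd0 hdd h)⟩
        · rintro e₁ ⟨h₁, -⟩ e₂ ⟨h₂, -⟩ h
          exact h₁.eq_of_primeFactors_eq hd0 h₂ h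
    _ = _ := by rw [Set.ncard_coe_finset, hS]

def plusSolutions (d : ℕ) : Set (ℕ × ℕ × ℕ) :=
  {T | 2 ≤ T.1 ∧ 1 ≤ T.2.1 ∧ T.2.1 < T.2.2 ∧ ¬ IsPerfectPow T.1 ∧ T.1 ^ T.2.2 + T.1 ^ T.2.1 = d}

def minusSolutions (d : ℕ) : Set (ℕ × ℕ × ℕ) :=
  {T | 2 ≤ T.1 ∧ 1 ≤ T.2.1 ∧ T.2.1 < T.2.2 ∧ ¬ IsPerfectPow T.1 ∧ T.1 ^ T.2.2 = T.1 ^ T.2.1 + d}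

@[simp]
lemma mem_plusSolutions {d g x y : ℕ} : (g, x, y) ∈ plusSolutions d ↔
    2 ≤ g ∧ 1 ≤ x ∧ x < y ∧ ¬ IsPerfectPow g ∧ g ^ y + g ^ x = d := Iff.rfl

@[simp]
lemma mem_minusSolutions {d g x y : ℕ} : (g, x, y) ∈ minusSolutions d ↔
    2 ≤ g ∧ 1 ≤ x ∧ x < y ∧ ¬ IsPerfectPow g ∧ g ^ y = g ^ x + d := Iff.rfl

lemma Nplus_eq_ncard (d : ℕ) : Nplus d = (plusSolutions d).ncard := rfl

lemma Nminus_eq_ncard (d : ℕ) : Nminus d = (minusSolutions d).ncard := rfl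

lemma eq_two_of_pow_eq_pow_add_two {g u v : ℕ} (hu : u ≠ 0) (h : g ^ v = g ^ u + 2) :
    g = 2 ∧ u = 1 := by
  have hv : v ≠ 0 := by rintro rfl; rw [pow_zero] at h; omega
  have hg : g ∣ 2 := (Nat.dvd_add_right (dvd_pow_self g hu)).mp (h ▸ dvd_pow_self g hv)
  have hg2 : g = 2 := by
    rcases (Nat.dvd_prime Nat.prime_two).mp hg with rfl | rfl
    · simp at h
    · rfl
  subst hg2
  obtain ⟨u, rfl⟩ := Nat.exists_eq_succ_of_ne_zero hu
  obtain ⟨v, rfl⟩ := Nat.exists_eq_succ_of_ne_zero hv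
  refine ⟨rfl, ?_⟩
  have h' : 2 ^ v = 2 ^ u + 1 := by rw [pow_succ, pow_succ] at h; omega
  -- for `u ≠ 0` the two sides of `h'` have different parities
  by_contra hu1
  have hv0 : v ≠ 0 := by rintro rfl; simp at h'
  have := dvd_pow_self 2 hv0
  have := dvd_pow_self 2 (by omega : u ≠ 0)
  omega

section Solutions

variable {d g x y : ℕ}

lemma pow_mul_pow_sub_add_one_eq_of_mem_plusSolutions (h : (g, x, y) ∈ plusSolutions d) :
    g ^ x * (g ^ (y - x) + 1) = d := by
  obtain ⟨-, -, hxy, -, rfl⟩ := mem_plusSolutions.mp h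
  rw [mul_add_one, ← pow_add, Nat.add_sub_cancel' hxy.le]

lemma pow_mul_pow_sub_sub_one_eq_of_mem_minusSolutions (h : (g, x, y) ∈ minusSolutions d) :
    g ^ x * (g ^ (y - x) - 1) = d := by
  obtain ⟨-, -, hxy, -, heq⟩ := mem_minusSolutions.mp h
  rw [Nat.mul_sub_one, ← pow_add, Nat.add_sub_cancel' hxy.le]
  omega

lemma pow_mem_properUnitaryDivisors_of_mem_plusSolutions (h : (g, x, y) ∈ plusSolutions d) :
    g ^ x ∈ properUnitaryDivisors d := by
  have hd := pow_mul_pow_sub_add_one_eq_of_mem_plusSolutions h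
  obtain ⟨hg, hx, hxy, -⟩ := mem_plusSolutions.mp h
  have hgx : 1 < g ^ x := Nat.one_lt_pow (by omega) hg
  have hgu : 1 < g ^ (y - x) := Nat.one_lt_pow (by omega) hg
  refine ⟨⟨_, hd, ?_⟩, hgx, ?_⟩
  · exact Nat.Coprime.pow_left x <| Nat.Coprime.coprime_dvd_left (dvd_pow_self g (by omega)) <|
      Nat.coprime_self_add_right.mpr (Nat.coprime_one_right _)
  · rw [← hd]
    exact lt_mul_right (by omega) (by omega)

lemma pow_mem_properUnitaryDivisors_of_mem_minusSolutions (hω : 2 ≤ d.primeFactors.card)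
    (h : (g, x, y) ∈ minusSolutions d) : g ^ x ∈ properUnitaryDivisors d := by
  have hd := pow_mul_pow_sub_sub_one_eq_of_mem_minusSolutions h
  obtain ⟨hg, hx, hxy, -⟩ := mem_minusSolutions.mp h
  have hgx : 1 < g ^ x := Nat.one_lt_pow (by omega) hg
  have hgu : 2 < g ^ (y - x) := by
    refine lt_of_le_of_ne (Nat.one_lt_pow (by omega) hg) fun h2 => ?_
    have hg2 : g = 2 := le_antisymm (Nat.le_of_dvd two_pos (h2 ▸ dvd_pow_self g (by omega))) hg
    rw [← hd, ← h2, hg2, Nat.add_one_sub_one, mul_one,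
      Nat.primeFactors_prime_pow (by omega) Nat.prime_two, Finset.card_singleton] at hω
    omega
  refine ⟨⟨_, hd, ?_⟩, hgx, ?_⟩
  · exact Nat.Coprime.pow_left x <| Nat.Coprime.coprime_dvd_left (dvd_pow_self g (by omega)) <|
      (Nat.coprime_self_sub_right (by omega)).mpr (Nat.coprime_one_right _)
  · rw [← hd]
    exact lt_mul_right (by omega) (by omega)

lemma injOn_plusSolutions : Set.InjOn (fun T : ℕ × ℕ × ℕ => T.1 ^ T.2.1) (plusSolutions d) := by
  rintro ⟨g, x, y⟩ h ⟨g', x', y'⟩ h' he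
  dsimp only at he
  obtain ⟨hg, hx, -, hgp, hd⟩ := mem_plusSolutions.mp h
  obtain ⟨hg', -, -, hgp', hd'⟩ := mem_plusSolutions.mp h'
  obtain ⟨rfl, rfl⟩ := eq_and_eq_of_pow_eq_pow_of_not_isPerfectPow hg hg' hgp hgp' (by omega) he
  have hy : g ^ y = g ^ y' := by omega
  rw [Nat.pow_right_injective hg hy]

lemma injOn_minusSolutions : Set.InjOn (fun T : ℕ × ℕ × ℕ => T.1 ^ T.2.1) (minusSolutions d) := by
  rintro ⟨g, x, y⟩ h ⟨g', x', y'⟩ h' he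
  dsimp only at he
  obtain ⟨hg, hx, -, hgp, hd⟩ := mem_minusSolutions.mp h
  obtain ⟨hg', -, -, hgp', hd'⟩ := mem_minusSolutions.mp h'
  obtain ⟨rfl, rfl⟩ := eq_and_eq_of_pow_eq_pow_of_not_isPerfectPow hg hg' hgp hgp' (by omega) he
  have hy : g ^ y = g ^ y' := by omega
  rw [Nat.pow_right_injective hg hy]

lemma plusSolutions_finite (hd : d ≠ 0) : (plusSolutions d).Finite := by
  refine Set.Finite.of_finite_image ((Set.finite_Iic d).subset ?_) injOn_plusSolutions
  rintro _ ⟨⟨g, x, y⟩, h, rfl⟩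
  exact Nat.le_of_dvd (Nat.pos_of_ne_zero hd)
    ⟨_, (pow_mul_pow_sub_add_one_eq_of_mem_plusSolutions h).symm⟩

lemma minusSolutions_finite (hd : d ≠ 0) : (minusSolutions d).Finite := by
  refine Set.Finite.of_finite_image ((Set.finite_Iic d).subset ?_) injOn_minusSolutions
  rintro _ ⟨⟨g, x, y⟩, h, rfl⟩
  exact Nat.le_of_dvd (Nat.pos_of_ne_zero hd)
    ⟨_, (pow_mul_pow_sub_sub_one_eq_of_mem_minusSolutions h).symm⟩

lemma disjoint_image_plusSolutions_minusSolutions (hω : 3 ≤ d.primeFactors.card) :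
    Disjoint ((fun T : ℕ × ℕ × ℕ => T.1 ^ T.2.1) '' plusSolutions d)
      ((fun T : ℕ × ℕ × ℕ => T.1 ^ T.2.1) '' minusSolutions d) := by
  rw [Set.disjoint_left]
  rintro _ ⟨⟨g, x, y⟩, h, rfl⟩ ⟨⟨g', x', y'⟩, h', he⟩
  dsimp only at he
  obtain ⟨hg, hx, hxy, hgp, -⟩ := mem_plusSolutions.mp h
  obtain ⟨hg', hx', hxy', hgp', -⟩ := mem_minusSolutions.mp h'
  obtain ⟨rfl, rfl⟩ :=
    eq_and_eq_of_pow_eq_pow_of_not_isPerfectPow hg hg' hgp hgp' (by omega) he.symm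
  have hd := pow_mul_pow_sub_add_one_eq_of_mem_plusSolutions h
  have hd' := pow_mul_pow_sub_sub_one_eq_of_mem_minusSolutions h'
  have hv : g ^ (y' - x) = g ^ (y - x) + 2 := by
    have := Nat.eq_of_mul_eq_mul_left (by positivity) (hd.trans hd'.symm)
    have := Nat.one_le_pow (y' - x) g (by omega)
    omega
  obtain ⟨rfl, hu⟩ := eq_two_of_pow_eq_pow_add_two (by omega) hv
  have hd3 : d = 2 ^ x * 3 := by rw [← hd, hu]; rfl
  rw [hd3, Nat.primeFactors_mul (by positivity) (by norm_num),
    Nat.primeFactors_prime_pow (by omega) Nat.prime_two, Nat.prime_three.primeFactors] at hω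
  exact absurd (hω.trans (Finset.card_union_le _ _)) (by simp)

lemma Nplus_add_Nminus_le (hω : 3 ≤ d.primeFactors.card) :
    Nplus d + Nminus d ≤ 2 ^ d.primeFactors.card - 2 := by
  have hd : 1 < d := by
    by_contra! hd
    interval_cases d <;> simp at hω
  set f := fun T : ℕ × ℕ × ℕ => T.1 ^ T.2.1
  set U := properUnitaryDivisors d
  have hU : U.Finite := (Set.finite_Iio d).subset fun e he => he.2.2
  have hplus : f '' plusSolutions d ⊆ U := by
    rintro _ ⟨⟨g, x, y⟩, h, rfl⟩
    exact pow_mem_properUnitaryDivisors_of_mem_plusSolutions h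
  have hminus : f '' minusSolutions d ⊆ U := by
    rintro _ ⟨⟨g, x, y⟩, h, rfl⟩
    exact pow_mem_properUnitaryDivisors_of_mem_minusSolutions (by omega) h
  rw [Nplus_eq_ncard, Nminus_eq_ncard, ← injOn_plusSolutions.ncard_image,
    ← injOn_minusSolutions.ncard_image,
    ← Set.ncard_union_eq (disjoint_image_plusSolutions_minusSolutions hω) (hU.subset hplus)
      (hU.subset hminus)]
  exact (Set.ncard_le_ncard (Set.union_subset hplus hminus) hU).trans
    (ncard_properUnitaryDivisors_le hd)

end Solutions

/-- The pairs in `ℳ(d)` with an entry `±1`, and the pair `(-g ^ x, g ^ x)` that arises when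
`2 g ^ x = d`. -/
def exceptionalPairs (d : ℕ) : Set (ℤ × ℤ) :=
  {(1, (d : ℤ) + 1), (-1, (d : ℤ) - 1), (1 - (d : ℤ), 1), (-1 - (d : ℤ), -1),
    (-((d : ℤ) / 2), (d : ℤ) / 2)}

def candidatePairs (d : ℕ) : Set (ℤ × ℤ) :=
  exceptionalPairs d ∪
    (fun T : ℕ × ℕ × ℕ => (-(T.1 : ℤ) ^ T.2.1, (T.1 : ℤ) ^ T.2.2)) '' plusSolutions d ∪
    (fun T : ℕ × ℕ × ℕ => (-(T.1 : ℤ) ^ T.2.2, (T.1 : ℤ) ^ T.2.1)) '' plusSolutions d ∪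
    (fun T : ℕ × ℕ × ℕ => ((T.1 : ℤ) ^ T.2.1, (T.1 : ℤ) ^ T.2.2)) '' minusSolutions d ∪
    (fun T : ℕ × ℕ × ℕ => (-(T.1 : ℤ) ^ T.2.2, -(T.1 : ℤ) ^ T.2.1)) '' minusSolutions d

section Candidates

variable {d : ℕ}

lemma mem_exceptionalPairs_of_natAbs_eq_one {a b : ℤ} (hab : b - a = d)
    (h : a.natAbs = 1 ∨ b.natAbs = 1) : (a, b) ∈ exceptionalPairs d := by
  simp only [exceptionalPairs, Set.mem_insert_iff, Set.mem_singleton_iff, Prod.mk.injEq]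
  omega

lemma mem_candidatePairs_of_natAbs_eq_pow {a b : ℤ} {g x y : ℕ} (hd : 0 < d) (hab : b - a = d)
    (hg : 2 ≤ g) (hgp : ¬IsPerfectPow g) (hx : 0 < x) (hy : 0 < y) (ha : a.natAbs = g ^ x)
    (hb : b.natAbs = g ^ y) : (a, b) ∈ candidatePairs d := by
  have hg1 : (1 : ℤ) < g := by exact_mod_cast hg
  have hgx : (0 : ℤ) < g ^ x := by positivity
  have hgy : (0 : ℤ) < g ^ y := by positivity
  simp only [candidatePairs, Set.mem_union, Set.mem_image, Prod.mk.injEq]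
  rcases Int.natAbs_eq_iff.mp ha with rfl | rfl <;>
    rcases Int.natAbs_eq_iff.mp hb with rfl | rfl <;>
    simp only [Nat.cast_pow] at hab ⊢
  · have hxy : x < y := (pow_lt_pow_iff_right₀ hg1).mp (by omega)
    refine .inl (.inr ⟨(g, x, y), mem_minusSolutions.mpr ⟨hg, hx, hxy, hgp, ?_⟩, rfl, rfl⟩)
    exact_mod_cast (by omega : (g : ℤ) ^ y = (g : ℤ) ^ x + d)
  · omega
  · rcases lt_trichotomy x y with hxy | rfl | hxy
    · refine .inl (.inl (.inl (.inr ⟨(g, x, y), mem_plusSolutions.mpr ⟨hg, hx, hxy, hgp, ?_⟩,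
        rfl, rfl⟩)))
      exact_mod_cast (by omega : (g : ℤ) ^ y + (g : ℤ) ^ x = d)
    · refine .inl (.inl (.inl (.inl ?_)))
      simp only [exceptionalPairs, Set.mem_insert_iff, Set.mem_singleton_iff, Prod.mk.injEq]
      omega
    · refine .inl (.inl (.inr ⟨(g, y, x), mem_plusSolutions.mpr ⟨hg, hy, hxy, hgp, ?_⟩, rfl, rfl⟩))
      exact_mod_cast (by omega : (g : ℤ) ^ x + (g : ℤ) ^ y = d)
  · have hyx : y < x := (pow_lt_pow_iff_right₀ hg1).mp (by omega)
    refine .inr ⟨(g, y, x), mem_minusSolutions.mpr ⟨hg, hy, hyx, hgp, ?_⟩, rfl, rfl⟩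
    exact_mod_cast (by omega : (g : ℤ) ^ x = (g : ℤ) ^ y + d)

lemma MSet_subset_candidatePairs (hd : 0 < d) : MSet d ⊆ candidatePairs d := by
  rintro ⟨a, b⟩ ⟨hdep, hab⟩
  by_cases hunit : a.natAbs = 1 ∨ b.natAbs = 1
  · exact .inl (.inl (.inl (.inl (mem_exceptionalPairs_of_natAbs_eq_one hab hunit))))
  obtain ⟨ha, hb⟩ := mul_ne_zero_iff.mp hdep.1
  have ha' := Int.natAbs_ne_zero.mpr ha
  have hb' := Int.natAbs_ne_zero.mpr hb
  obtain ⟨g, x, y, hg, hgp, hx, hy, hax, hby⟩ := hdep.exists_natAbs_eq_pow (by omega) (by omega)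
  exact mem_candidatePairs_of_natAbs_eq_pow hd hab hg hgp hx hy hax hby

lemma candidatePairs_finite (hd : d ≠ 0) : (candidatePairs d).Finite := by
  have he : (exceptionalPairs d).Finite := by unfold exceptionalPairs; exact Set.toFinite _
  have hp := plusSolutions_finite hd
  have hm := minusSolutions_finite hd
  exact (((he.union (hp.image _)).union (hp.image _)).union (hm.image _)).union (hm.image _)

lemma ncard_exceptionalPairs_le : (exceptionalPairs d).ncard ≤ 5 := by
  unfold exceptionalPairs
  grw [Set.ncard_insert_le, Set.ncard_insert_le, Set.ncard_insert_le, Set.ncard_insert_le,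
    Set.ncard_singleton]

lemma ncard_candidatePairs_le (hd : d ≠ 0) :
    (candidatePairs d).ncard ≤ 5 + 2 * (Nplus d + Nminus d) := by
  have hp := plusSolutions_finite hd
  have hm := minusSolutions_finite hd
  unfold candidatePairs
  grw [Set.ncard_union_le, Set.ncard_union_le, Set.ncard_union_le, Set.ncard_union_le,
    ncard_exceptionalPairs_le, Set.ncard_image_le hp, Set.ncard_image_le hp,
    Set.ncard_image_le hm, Set.ncard_image_le hm, Nplus_eq_ncard, Nminus_eq_ncard]
  omega

lemma M_le_five_add_two_mul (hd : 0 < d) : M d ≤ 5 + 2 * (Nplus d + Nminus d) :=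
  (Set.ncard_le_ncard (MSet_subset_candidatePairs hd) (candidatePairs_finite hd.ne')).trans
    (ncard_candidatePairs_le hd.ne')

end Candidates

theorem stmt12_general (d m : ℕ) (hd : 0 < d)
    (hm : d.primeFactors.card = m) (hm3 : 3 ≤ m) :
    M (d : ℤ) ≤ 2 ^ (m + 1) + 1 := by
  have hM := M_le_five_add_two_mul hd
  have hN := Nplus_add_Nminus_le (hm ▸ hm3)
  have h8 : 2 ^ 3 ≤ 2 ^ m := Nat.pow_le_pow_right two_pos hm3
  rw [hm] at hN
  rw [pow_succ]
  omega

theorem stmt12 (d m : ℕ) (hd : 0 < d) (heven : Even d)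
    (hm : d.primeFactors.card = m) (hm3 : 3 ≤ m) :
    M (d : ℤ) ≤ 2 ^ (m + 1) + 1 :=
  stmt12_general d m hd hm hm3
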